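/- arXiv:math/0404010 — 6 statements merged into one kernel-verified Lean document; each statement's English description precedes it below -/
import Mathlib

section
/- Let A be a unital associative k-algebra and x, y nonzero scalars in k. The linear map R_{x,y}: A⊗A → A⊗A defined by R_{x,y}(a⊗b) = x·(ab⊗1) + y·(1⊗ab) − x·(a⊗b) satisfies the braid equation R¹²∘R²³∘R¹² = R²³∘R¹²∘R²³. -/
open TensorProduct LinearMap

/-- The operator `R_{x,y,z} : A ⊗ A → A ⊗ A`, `a ⊗ b ↦ x•(ab ⊗ 1) + y•(1 ⊗ ab) - z•(a ⊗ b)`. -/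
noncomputable def yangBaxterOp (k : Type*) [Field k] (A : Type*) [Ring A] [Algebra k A]
    (x y z : k) : A ⊗[k] A →ₗ[k] A ⊗[k] A :=
  x • ((TensorProduct.mk k A A).flip 1 ∘ₗ LinearMap.mul' k A) +
    y • (TensorProduct.mk k A A 1 ∘ₗ LinearMap.mul' k A) -
      z • LinearMap.id

lemma yangBaxterOp_tmul (k : Type*) [Field k] (A : Type*) [Ring A] [Algebra k A]
    (x y z : k) (a b : A) :
    yangBaxterOp k A x y z (a ⊗ₜ[k] b) =
      x • ((a * b) ⊗ₜ[k] (1 : A)) + y • ((1 : A) ⊗ₜ[k] (a * b)) - z • (a ⊗ₜ[k] b) := by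
  simp [yangBaxterOp, LinearMap.mul'_apply]

/-- for `x, y` nonzero, `R_{x,y} = R_{x,y,x}` satisfies the braid equation. -/
theorem yangBaxterOp_satisfies_braid_equation (k : Type*) [Field k]
    (A : Type*) [Ring A] [Algebra k A] (x y : k) (hx : x ≠ 0) (hy : y ≠ 0) :
    let R : A ⊗[k] A →ₗ[k] A ⊗[k] A := yangBaxterOp k A x y x
    let R12 : (A ⊗[k] A) ⊗[k] A →ₗ[k] (A ⊗[k] A) ⊗[k] A := LinearMap.rTensor A R
    let R23 : (A ⊗[k] A) ⊗[k] A →ₗ[k] (A ⊗[k] A) ⊗[k] A :=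
      (TensorProduct.assoc k A A A).symm.toLinearMap ∘ₗ LinearMap.lTensor A R ∘ₗ
        (TensorProduct.assoc k A A A).toLinearMap
    R12 ∘ₗ R23 ∘ₗ R12 = R23 ∘ₗ R12 ∘ₗ R23 := by
  intro R R12 R23
  apply TensorProduct.ext
  apply TensorProduct.ext
  ext a b c
  simp only [R, R12, R23, LinearMap.comp_apply, LinearMap.compr₂_apply, LinearMap.compr₂ₛₗ_apply, TensorProduct.mk_apply,
    yangBaxterOp_tmul, map_add, map_sub, map_smul, LinearMap.rTensor_tmul, LinearMap.lTensor_tmul,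
    LinearEquiv.coe_coe, TensorProduct.assoc_tmul, TensorProduct.assoc_symm_tmul,
    TensorProduct.tmul_add, TensorProduct.tmul_sub, TensorProduct.add_tmul,
    TensorProduct.sub_tmul, TensorProduct.tmul_smul, ← TensorProduct.smul_tmul',
    one_mul, mul_one, smul_smul, mul_assoc, smul_mul_assoc, mul_smul_comm]
  module
end

section
/- Let A be a unital associative k-algebra and x, y nonzero scalars. Define R_{x,y}(a⊗b) = x·(ab⊗1) + y·(1⊗ab) − x·(a⊗b) and S(a⊗b) = y⁻¹·(ab⊗1) + x⁻¹·(1⊗ab) − x⁻¹·(a⊗b). Then S∘R_{x,y} = Id and R_{x,y}∘S = Id; i.e., R_{x,y} is invertible with inverse S. -/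
open TensorProduct LinearMap

/-- `R_{x,y}` is invertible with inverse
`S(a ⊗ b) = y⁻¹•(ab ⊗ 1) + x⁻¹•(1 ⊗ ab) - x⁻¹•(a ⊗ b)`. -/
theorem yangBaxterOp_inverse (k : Type*) [Field k]
    (A : Type*) [Ring A] [Algebra k A] (x y : k) (hx : x ≠ 0) (hy : y ≠ 0) :
    let R : A ⊗[k] A →ₗ[k] A ⊗[k] A := yangBaxterOp k A x y x
    let S : A ⊗[k] A →ₗ[k] A ⊗[k] A := yangBaxterOp k A y⁻¹ x⁻¹ x⁻¹
    S ∘ₗ R = LinearMap.id ∧ R ∘ₗ S = LinearMap.id := by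
  constructor <;>
  · apply TensorProduct.ext'
    intro a b
    simp only [yangBaxterOp, LinearMap.comp_apply, LinearMap.sub_apply, LinearMap.add_apply,
      LinearMap.smul_apply, LinearMap.id_apply, map_add, map_sub, map_smul,
      TensorProduct.mk_apply, LinearMap.flip_apply, LinearMap.mul'_apply,
      mul_one, one_mul, smul_add, smul_sub, smul_smul]
    simp only [mul_inv_cancel₀ hx, inv_mul_cancel₀ hx, mul_inv_cancel₀ hy, inv_mul_cancel₀ hy]
    module
end

section
/- Let A be a unital associative k-algebra and x, y nonzero scalars. The operator R_{x,y}(a⊗b) = x·(ab⊗1) + y·(1⊗ab) − x·(a⊗b) satisfies the quadratic relation R_{x,y}² = (y−x)·R_{x,y} + xy·Id on A⊗A. -/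
open TensorProduct LinearMap

/-- `R_{x,y}` satisfies the quadratic relation
`R² = (y - x)•R + xy•Id` on `A ⊗ A`. -/
theorem yangBaxterOp_quadratic (k : Type*) [Field k]
    (A : Type*) [Ring A] [Algebra k A] (x y : k) (hx : x ≠ 0) (hy : y ≠ 0) :
    let R : A ⊗[k] A →ₗ[k] A ⊗[k] A := yangBaxterOp k A x y x
    R ∘ₗ R = (y - x) • R + (x * y) • LinearMap.id := by
  intro R
  ext a b
  simp only [R, yangBaxterOp, TensorProduct.AlgebraTensorModule.curry_apply,
    LinearMap.coe_comp, Function.comp_apply, LinearMap.add_apply, LinearMap.sub_apply,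
    LinearMap.smul_apply, LinearMap.id_apply, LinearMap.mul'_apply,
    TensorProduct.curry_apply, LinearMap.coe_restrictScalars,
    TensorProduct.mk_apply, LinearMap.flip_apply, map_add, map_sub, map_smul,
    mul_one, one_mul, smul_smul]
  module
end

section
/- Let A be a unital associative k-algebra and x, y nonzero scalars. With R = R_{x,y} and R⁻¹ its inverse, one has R − xy·R⁻¹ = (y−x)·Id on A⊗A. -/
open TensorProduct LinearMap

/-- with `R = R_{x,y}` and `R⁻¹` its inverse, one has
`R - xy•R⁻¹ = (y - x)•Id` on `A ⊗ A`. -/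
theorem yangBaxterOp_sub_smul_inv (k : Type*) [Field k]
    (A : Type*) [Ring A] [Algebra k A] (x y : k) (hx : x ≠ 0) (hy : y ≠ 0)
    (Rinv : A ⊗[k] A →ₗ[k] A ⊗[k] A)
    (hRinv₁ : Rinv ∘ₗ yangBaxterOp k A x y x = LinearMap.id)
    (hRinv₂ : yangBaxterOp k A x y x ∘ₗ Rinv = LinearMap.id) :
    yangBaxterOp k A x y x - (x * y) • Rinv = (y - x) • LinearMap.id := by
  have key : yangBaxterOp k A x y x ∘ₗ yangBaxterOp k A x y x
      = (y - x) • yangBaxterOp k A x y x + (x * y) • LinearMap.id := by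
    apply TensorProduct.ext'
    intro a b
    simp only [yangBaxterOp, LinearMap.add_apply, LinearMap.sub_apply, LinearMap.smul_apply,
      LinearMap.comp_apply, LinearMap.id_apply, LinearMap.mul'_apply,
      TensorProduct.mk_apply, LinearMap.flip_apply, map_add, map_sub, map_smul,
      mul_one, one_mul]
    module
  have h := congrArg (fun f => f ∘ₗ Rinv) key
  simp only [LinearMap.comp_assoc, hRinv₂, LinearMap.add_comp, LinearMap.smul_comp,
    LinearMap.comp_id, LinearMap.id_comp] at h
  rw [h]
  module
end

section
/- Let A be a unital associative k-algebra, x, y nonzero scalars, z a scalar with z ≠ x and z ≠ y. Then the map R_{x,y,z}(a⊗b) = x·(ab⊗1) + y·(1⊗ab) − z·(a⊗b) fails the braid equation whenever A has dimension at least 2 and x, y are both nonzero with z ∉ {x, y}: indeed, if x ≠ z and y ≠ z and (x,y) ≠ (0,0), then R_{x,y,z} does not satisfy R¹²∘R²³∘R¹² = R²³∘R¹²∘R²³. -/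
open TensorProduct LinearMap

/-- Auxiliary: from `2 ≤ rank`, get dual functionals separating `1` and some `a`. -/
theorem yangBaxter_aux_functionals (k : Type*) [Field k] (A : Type*) [Ring A] [Algebra k A]
    (hA : 2 ≤ Module.rank k A) :
    ∃ (a : A) (f g : A →ₗ[k] k), f 1 = 1 ∧ f a = 0 ∧ g 1 = 0 ∧ g a = 1 := by
  have h1 : (1:A) ≠ 0 := by
    rcases subsingleton_or_nontrivial A with hs | hn
    · exact absurd (hA.trans_eq (rank_subsingleton' k A)) (by norm_num)
    · exact one_ne_zero
  obtain ⟨a, ha⟩ : ∃ a : A, a ∉ Submodule.span k {(1:A)} := by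
    by_contra hcon
    push_neg at hcon
    have htop : Submodule.span k {(1:A)} = ⊤ := eq_top_iff.2 fun v _ => hcon v
    have hr := rank_span_le (R := k) ({(1:A)} : Set A)
    rw [htop, rank_top, Cardinal.mk_singleton] at hr
    exact absurd (hA.trans hr) (by norm_num)
  have hne : a ≠ 1 := fun h => ha (h ▸ Submodule.mem_span_singleton_self _)
  have hli : LinearIndepOn k id (insert a {(1:A)} : Set A) := by
    refine (linearIndepOn_id_insert ?_).2 ⟨?_, by simpa using ha⟩
    · simp [hne]
    · exact (linearIndepOn_singleton_iff k).2 h1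
  let B := Module.Basis.extend hli
  have hmem1 : (1:A) ∈ hli.extend (Set.subset_univ _) :=
    hli.subset_extend _ (Set.mem_insert_of_mem _ rfl)
  have hmema : a ∈ hli.extend (Set.subset_univ _) :=
    hli.subset_extend _ (Set.mem_insert _ _)
  have e1 : B ⟨1, hmem1⟩ = 1 := Module.Basis.extend_apply_self hli _
  have ea : B ⟨a, hmema⟩ = a := Module.Basis.extend_apply_self hli _
  have hij : (⟨a, hmema⟩ : hli.extend (Set.subset_univ _)) ≠ ⟨1, hmem1⟩ := by
    simp [Subtype.ext_iff, hne]
  refine ⟨a, B.coord ⟨1, hmem1⟩, B.coord ⟨a, hmema⟩, ?_, ?_, ?_, ?_⟩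
  · calc B.coord ⟨1, hmem1⟩ 1 = B.coord ⟨1, hmem1⟩ (B ⟨1, hmem1⟩) := by rw [e1]
    _ = 1 := by simp [Module.Basis.coord_apply, Module.Basis.repr_self]
  · calc B.coord ⟨1, hmem1⟩ a = B.coord ⟨1, hmem1⟩ (B ⟨a, hmema⟩) := by rw [ea]
    _ = 0 := by simp [Module.Basis.coord_apply, Module.Basis.repr_self, Finsupp.single_apply, hij]
  · calc B.coord ⟨a, hmema⟩ 1 = B.coord ⟨a, hmema⟩ (B ⟨1, hmem1⟩) := by rw [e1]
    _ = 0 := by simp [Module.Basis.coord_apply, Module.Basis.repr_self, Finsupp.single_apply, hij.symm]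
  · calc B.coord ⟨a, hmema⟩ a = B.coord ⟨a, hmema⟩ (B ⟨a, hmema⟩) := by rw [ea]
    _ = 1 := by simp [Module.Basis.coord_apply, Module.Basis.repr_self]

set_option maxHeartbeats 1600000 in
/-- if `dim A ≥ 2`, `x ≠ z`, `y ≠ z` and `(x,y) ≠ (0,0)`, then
`R_{x,y,z}` does not satisfy the braid equation. -/
theorem yangBaxterOp_not_braid (k : Type*) [Field k]
    (A : Type*) [Ring A] [Algebra k A] (hA : 2 ≤ Module.rank k A)
    (x y z : k) (hxz : x ≠ z) (hyz : y ≠ z) (hxy : ¬(x = 0 ∧ y = 0)) :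
    let R : A ⊗[k] A →ₗ[k] A ⊗[k] A := yangBaxterOp k A x y z
    let R12 : (A ⊗[k] A) ⊗[k] A →ₗ[k] (A ⊗[k] A) ⊗[k] A := LinearMap.rTensor A R
    let R23 : (A ⊗[k] A) ⊗[k] A →ₗ[k] (A ⊗[k] A) ⊗[k] A :=
      (TensorProduct.assoc k A A A).symm.toLinearMap ∘ₗ LinearMap.lTensor A R ∘ₗ
        (TensorProduct.assoc k A A A).toLinearMap
    ¬ (R12 ∘ₗ R23 ∘ₗ R12 = R23 ∘ₗ R12 ∘ₗ R23) := by
  intro R R12 R23 h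
  obtain ⟨a, f, g, hf1, hfa, hg1, hga⟩ := yangBaxter_aux_functionals k A hA
  have hxz' : x - z ≠ 0 := sub_ne_zero.2 hxz
  have hyz' : y - z ≠ 0 := sub_ne_zero.2 hyz
  set φ : (A ⊗[k] A) ⊗[k] A →ₗ[k] k :=
    TensorProduct.lift ((LinearMap.mul k k).compl₁₂
      (TensorProduct.lift ((LinearMap.mul k k).compl₁₂ f g)) f) with hφ
  rcases eq_or_ne y 0 with hy | hy
  · -- y = 0, so x ≠ 0; use element 1 ⊗ 1 ⊗ a
    have hx : x ≠ 0 := fun hx0 => hxy ⟨hx0, hy⟩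
    have ht := congrArg φ (LinearMap.congr_fun h ((1 ⊗ₜ[k] 1) ⊗ₜ[k] a))
    simp only [R, R12, R23, φ, yangBaxterOp, LinearMap.comp_apply, map_add, map_sub, map_smul,
      LinearMap.add_apply, LinearMap.sub_apply, LinearMap.smul_apply, LinearMap.id_apply,
      rTensor_tmul, lTensor_tmul, LinearEquiv.coe_coe, TensorProduct.assoc_tmul,
      TensorProduct.assoc_symm_tmul, LinearMap.mul'_apply, TensorProduct.mk_apply,
      LinearMap.flip_apply, TensorProduct.lift.tmul, LinearMap.compl₁₂_apply,
      LinearMap.mul_apply', smul_tmul', tmul_smul, TensorProduct.add_tmul,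
      TensorProduct.sub_tmul, TensorProduct.tmul_add, TensorProduct.tmul_sub,
      smul_mul_assoc, mul_smul_comm, smul_eq_mul, mul_one, one_mul,
      hf1, hfa, hg1, hga] at ht
    have hkey : x * (x - z) * (y - z) = 0 := by linear_combination -ht
    exact (mul_ne_zero (mul_ne_zero hx hxz') hyz') hkey
  · -- y ≠ 0; use element a ⊗ 1 ⊗ 1
    have ht := congrArg φ (LinearMap.congr_fun h ((a ⊗ₜ[k] 1) ⊗ₜ[k] 1))
    simp only [R, R12, R23, φ, yangBaxterOp, LinearMap.comp_apply, map_add, map_sub, map_smul,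
      LinearMap.add_apply, LinearMap.sub_apply, LinearMap.smul_apply, LinearMap.id_apply,
      rTensor_tmul, lTensor_tmul, LinearEquiv.coe_coe, TensorProduct.assoc_tmul,
      TensorProduct.assoc_symm_tmul, LinearMap.mul'_apply, TensorProduct.mk_apply,
      LinearMap.flip_apply, TensorProduct.lift.tmul, LinearMap.compl₁₂_apply,
      LinearMap.mul_apply', smul_tmul', tmul_smul, TensorProduct.add_tmul,
      TensorProduct.sub_tmul, TensorProduct.tmul_add, TensorProduct.tmul_sub,
      smul_mul_assoc, mul_smul_comm, smul_eq_mul, mul_one, one_mul,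
      hf1, hfa, hg1, hga] at ht
    have hkey : y * (x - z) * (y - z) = 0 := by linear_combination ht
    exact (mul_ne_zero (mul_ne_zero hy hxz') hyz') hkey
end

section
/- Let A be a finite-dimensional unital k-algebra, μ: A → A a k-algebra automorphism, x, y nonzero scalars, and suppose that for every a ∈ A the trace of b ↦ a·μ(b) vanishes. Then the partial trace Sp₂(R_{x,y}∘(Id⊗μ)) equals x·Id_A. -/
open TensorProduct LinearMap

/-- The partial trace over the last tensor factor: for finite-dimensional `V` and
`f : W ⊗ V → W ⊗ V`, `ptrace f : W → W` has matrix coefficients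
`(ptrace f)ʲᵢ = Σ_l f^{jl}_{il}`. -/
noncomputable def ptrace (k : Type*) [Field k] (W V : Type*)
    [AddCommGroup W] [Module k W] [AddCommGroup V] [Module k V] [FiniteDimensional k V]
    (f : W ⊗[k] V →ₗ[k] W ⊗[k] V) : W →ₗ[k] W :=
  ∑ i : Fin (Module.finrank k V),
    (TensorProduct.rid k W).toLinearMap ∘ₗ
      LinearMap.lTensor W ((Module.finBasis k V).coord i) ∘ₗ f ∘ₗ
        (TensorProduct.mk k W V).flip (Module.finBasis k V i)

lemma trace_eq_sum_coord (k : Type*) [Field k] (A : Type*) [AddCommGroup A] [Module k A]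
    [FiniteDimensional k A] (f : A →ₗ[k] A) :
    ∑ i : Fin (Module.finrank k A),
      (Module.finBasis k A).coord i (f (Module.finBasis k A i)) = LinearMap.trace k A f := by
  rw [LinearMap.trace_eq_matrix_trace k (Module.finBasis k A) f, Matrix.trace]
  simp [Matrix.diag, LinearMap.toMatrix_apply, Module.Basis.coord_apply]

/-- if `A` is a finite-dimensional unital `k`-algebra, `μ` an algebra
automorphism of `A` such that `Trace(b ↦ a·μ(b)) = 0` for all `a ∈ A`, and `x, y` are
nonzero, then `Sp₂(R_{x,y} ∘ (Id ⊗ μ)) = x • Id_A`. -/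
theorem ptrace_yangBaxterOp_enhancement (k : Type*) [Field k]
    (A : Type*) [Ring A] [Algebra k A] [FiniteDimensional k A]
    (x y : k) (hx : x ≠ 0) (hy : y ≠ 0) (μ : A ≃ₐ[k] A)
    (htr : ∀ a : A, LinearMap.trace k A (LinearMap.mulLeft k a ∘ₗ μ.toLinearMap) = 0) :
    ptrace k A A (yangBaxterOp k A x y x ∘ₗ LinearMap.lTensor A μ.toLinearMap) =
      x • LinearMap.id := by
  classical
  ext w
  have key : ∀ i : Fin (Module.finrank k A),
      ((TensorProduct.rid k A).toLinearMap ∘ₗ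
        LinearMap.lTensor A ((Module.finBasis k A).coord i) ∘ₗ
          (yangBaxterOp k A x y x ∘ₗ LinearMap.lTensor A μ.toLinearMap) ∘ₗ
            (TensorProduct.mk k A A).flip (Module.finBasis k A i)) w
      = x • ((Module.finBasis k A).coord i 1 • (w * μ (Module.finBasis k A i))) + y • ((Module.finBasis k A).coord i (w * μ (Module.finBasis k A i)) • 1)
        - x • ((Module.finBasis k A).coord i (μ (Module.finBasis k A i)) • w) := by
    intro i
    simp [yangBaxterOp]
  rw [ptrace]
  simp only [LinearMap.sum_apply]
  rw [Finset.sum_congr rfl fun i _ => key i]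
  rw [Finset.sum_sub_distrib, Finset.sum_add_distrib]
  have hg : ∀ a : A, (LinearMap.mulLeft k w ∘ₗ μ.toLinearMap) a = w * μ a := fun a => rfl
  have S1 : ∑ i : Fin (Module.finrank k A), x • ((Module.finBasis k A).coord i 1 • (w * μ (Module.finBasis k A i))) = x • w := by
    rw [← Finset.smul_sum]
    congr 1
    calc ∑ i : Fin (Module.finrank k A), (Module.finBasis k A).coord i 1 • (w * μ (Module.finBasis k A i))
        = ∑ i : Fin (Module.finrank k A), (LinearMap.mulLeft k w ∘ₗ μ.toLinearMap) ((Module.finBasis k A).coord i 1 • Module.finBasis k A i) := by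
          simp [hg]
      _ = (LinearMap.mulLeft k w ∘ₗ μ.toLinearMap) (∑ i : Fin (Module.finrank k A), (Module.finBasis k A).coord i 1 • Module.finBasis k A i) := by
          rw [map_sum]
      _ = w := by
          simp only [Module.Basis.coord_apply, (Module.finBasis k A).sum_repr]
          simp
  have S2 : ∑ i : Fin (Module.finrank k A), y • ((Module.finBasis k A).coord i (w * μ (Module.finBasis k A i)) • (1 : A)) = 0 := by
    rw [← Finset.smul_sum, ← Finset.sum_smul]
    have : ∑ i : Fin (Module.finrank k A), (Module.finBasis k A).coord i (w * μ (Module.finBasis k A i)) = 0 := by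
      have := trace_eq_sum_coord k A (LinearMap.mulLeft k w ∘ₗ μ.toLinearMap)
      simp only [hg] at this
      rw [this, htr w]
    rw [this, zero_smul, smul_zero]
  have S3 : ∑ i : Fin (Module.finrank k A), x • ((Module.finBasis k A).coord i (μ (Module.finBasis k A i)) • w) = 0 := by
    rw [← Finset.smul_sum, ← Finset.sum_smul]
    have : ∑ i : Fin (Module.finrank k A), (Module.finBasis k A).coord i (μ (Module.finBasis k A i)) = 0 := by
      have := trace_eq_sum_coord k A μ.toLinearMap
      simp only [AlgEquiv.toLinearMap_apply] at this
      rw [this]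
      have h1 := htr 1
      rwa [LinearMap.mulLeft_one, LinearMap.id_comp] at h1
    rw [this, zero_smul, smul_zero]
  rw [S1, S2, S3]
  simp
end
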